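/- Let n ∈ ℕ and let g ∈ GL_n(ℚ̄) be a unipotent matrix. Then the Zariski closure Zcl(⟨g⟩) of the cyclic subgroup generated by g is an irreducible algebraic set: it is nonempty and cannot be written as a union X₁ ∪ X₂ of two algebraic sets with X₁ ≠ Zcl(⟨g⟩) and X₂ ≠ Zcl(⟨g⟩). -/

import Mathlib

noncomputable section

open scoped MatrixGroups
open MvPolynomial

/-- The field of algebraic numbers. -/
abbrev Qbar : Type := AlgebraicClosure ℚ

/-- The zero set `V(I)` of a set `I` of multivariate polynomials over `ℚ̄`. -/
def zeroSet {σ : Type} (I : Set (MvPolynomial σ Qbar)) : Set (σ → Qbar) :=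
  {a | ∀ f ∈ I, MvPolynomial.eval a f = 0}

/-- A subset of affine space over `ℚ̄` is an algebraic set if it is a zero set. -/
def IsAlgebraicSet {σ : Type} (X : Set (σ → Qbar)) : Prop :=
  ∃ I : Set (MvPolynomial σ Qbar), X = zeroSet I

/-- The Zariski closure: the smallest algebraic set containing `Y`. -/
def zariskiClosure {σ : Type} (Y : Set (σ → Qbar)) : Set (σ → Qbar) :=
  zeroSet {f : MvPolynomial σ Qbar | ∀ a ∈ Y, MvPolynomial.eval a f = 0}

/-- `X` is `d`-bounded over `ℚ`: it is the zero set of a set of polynomials of total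
degree at most `d` with rational coefficients. -/
def BoundedOverQ {σ : Type} (X : Set (σ → Qbar)) (d : ℕ) : Prop :=
  ∃ I : Set (MvPolynomial σ Qbar), X = zeroSet I ∧
    ∀ f ∈ I, f.totalDegree ≤ d ∧ ∀ m, f.coeff m ∈ Set.range (algebraMap ℚ Qbar)

/-- Coordinates for the affine space `ℚ̄^{n²+1}` in which `GL_n(ℚ̄)` is embedded. -/
abbrev glIdx (n : ℕ) : Type := (Fin n × Fin n) ⊕ Unit

/-- The point `(M, det(M)⁻¹)` of `ℚ̄^{n²+1}` associated to `g ∈ GL_n(ℚ̄)`. -/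
def glPoint {n : ℕ} (g : GL (Fin n) Qbar) : glIdx n → Qbar :=
  Sum.elim (fun p => (g : Matrix (Fin n) (Fin n) Qbar) p.1 p.2)
    (fun _ => ((g : Matrix (Fin n) (Fin n) Qbar).det)⁻¹)

/-- The matrix part of a point of `ℚ̄^{n²+1}`. -/
def pointMatrix {n : ℕ} (a : glIdx n → Qbar) : Matrix (Fin n) (Fin n) Qbar :=
  Matrix.of fun i j => a (Sum.inl (i, j))

/-- The height of a rational number `a/b` in lowest terms is `max |a| b`. -/
def ratHeight (q : ℚ) : ℕ := max q.num.natAbs q.den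

/-- `g` has rational entries, i.e. `g ∈ GL_n(ℚ)`. -/
def HasRatEntries {n : ℕ} (g : GL (Fin n) Qbar) : Prop :=
  ∀ i j, ∃ q : ℚ, (g : Matrix (Fin n) (Fin n) Qbar) i j = algebraMap ℚ Qbar q

/-- `g` has rational entries of height at most `h`. -/
def EntriesHeightLE {n : ℕ} (g : GL (Fin n) Qbar) (h : ℕ) : Prop :=
  ∀ i j, ∃ q : ℚ, (g : Matrix (Fin n) (Fin n) Qbar) i j = algebraMap ℚ Qbar q ∧ ratHeight q ≤ h

/-- A matrix `g` is unipotent if `(g - 1)^n = 0`. -/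
def IsUnipotent {n : ℕ} (g : GL (Fin n) Qbar) : Prop :=
  ((g : Matrix (Fin n) (Fin n) Qbar) - 1) ^ n = 0

/-- A matrix is semisimple if it is diagonalizable over `ℚ̄`. -/
def IsSemisimpleMat {n : ℕ} (M : Matrix (Fin n) (Fin n) Qbar) : Prop :=
  ∃ (P : GL (Fin n) Qbar) (dvec : Fin n → Qbar),
    M = (P : Matrix (Fin n) (Fin n) Qbar) * Matrix.diagonal dvec *
      ((P⁻¹ : GL (Fin n) Qbar) : Matrix (Fin n) (Fin n) Qbar)

/-- Iterated base-2 exponentiation: `iexp 0 x = x`, `iexp (k+1) x = 2 ^ iexp k x`. -/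
def iexp : ℕ → ℕ → ℕ
  | 0, x => x
  | k + 1, x => 2 ^ iexp k x


/-- The Zariski closure of the cyclic subgroup generated by `g`. -/
def cyclicClosure {n : ℕ} (g : GL (Fin n) Qbar) : Set (glIdx n → Qbar) :=
  zariskiClosure (glPoint ''
    ((Subgroup.closure {g} : Subgroup (GL (Fin n) Qbar)) : Set (GL (Fin n) Qbar)))

/-!
Put `N = g - 1`, which is nilpotent. The binomial series gives `g ^ k = ∑_{j<n} (k choose j) N ^ j`
for every `k ∈ ℤ`, and `det (g ^ k) = 1`, so the points of `⟨g⟩` are the values at the integers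
of a polynomial curve `c : ℚ̄ → ℚ̄^{n²+1}`. If `⟨g⟩ ⊆ V(I₁) ∪ V(I₂)` but `f₁ ∈ I₁`, `f₂ ∈ I₂` do not
vanish on all of `⟨g⟩`, then `(f₁ ∘ c) (f₂ ∘ c)` is a product of two nonzero polynomials vanishing
at every integer, which is absurd.
-/

open scoped Polynomial
open Finset

section ZariskiClosure

variable {σ : Type}

lemma subset_zariskiClosure (Y : Set (σ → Qbar)) : Y ⊆ zariskiClosure Y :=
  fun _ ha _ hf => hf _ ha

lemma zariskiClosure_subset_zeroSet {Y : Set (σ → Qbar)} {I : Set (MvPolynomial σ Qbar)}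
    (h : Y ⊆ zeroSet I) : zariskiClosure Y ⊆ zeroSet I :=
  fun _ ha f hf => ha f fun _ hb => h hb f hf

lemma eq_zariskiClosure_or_eq_of_union_eq {Y X₁ X₂ : Set (σ → Qbar)}
    (hY : ∀ I₁ I₂, Y ⊆ zeroSet I₁ ∪ zeroSet I₂ → Y ⊆ zeroSet I₁ ∨ Y ⊆ zeroSet I₂)
    (h₁ : IsAlgebraicSet X₁) (h₂ : IsAlgebraicSet X₂) (hU : zariskiClosure Y = X₁ ∪ X₂) :
    X₁ = zariskiClosure Y ∨ X₂ = zariskiClosure Y := by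
  obtain ⟨I₁, rfl⟩ := h₁
  obtain ⟨I₂, rfl⟩ := h₂
  have hYU : Y ⊆ zeroSet I₁ ∪ zeroSet I₂ := hU ▸ subset_zariskiClosure Y
  rw [hU]
  refine (hY I₁ I₂ hYU).imp (fun h => ?_) fun h => ?_
  · exact Set.Subset.antisymm Set.subset_union_left (hU ▸ zariskiClosure_subset_zeroSet h)
  · exact Set.Subset.antisymm Set.subset_union_right (hU ▸ zariskiClosure_subset_zeroSet h)

def curvePoint (c : σ → Qbar[X]) (x : Qbar) : σ → Qbar :=
  fun s => (c s).eval x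

lemma eval_curvePoint (c : σ → Qbar[X]) (f : MvPolynomial σ Qbar) (x : Qbar) :
    MvPolynomial.eval (curvePoint c x) f = (aeval c f).eval x := by
  rw [← Polynomial.coe_aeval_eq_eval, ← AlgHom.comp_apply, comp_aeval]
  rfl

lemma image_curvePoint_subset_or_of_subset_union (c : σ → Qbar[X]) {S : Set Qbar}
    (hS : S.Infinite) {I₁ I₂ : Set (MvPolynomial σ Qbar)}
    (h : curvePoint c '' S ⊆ zeroSet I₁ ∪ zeroSet I₂) :
    curvePoint c '' S ⊆ zeroSet I₁ ∨ curvePoint c '' S ⊆ zeroSet I₂ := by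
  by_contra! hne
  obtain ⟨-, ⟨x₁, -, rfl⟩, hx₁⟩ := Set.not_subset.mp hne.1
  obtain ⟨-, ⟨x₂, -, rfl⟩, hx₂⟩ := Set.not_subset.mp hne.2
  simp only [zeroSet, Set.mem_ofPred_eq, not_forall, exists_prop, eval_curvePoint] at hx₁ hx₂
  obtain ⟨f₁, hf₁, hx₁⟩ := hx₁
  obtain ⟨f₂, hf₂, hx₂⟩ := hx₂
  have hprod : aeval c f₁ * aeval c f₂ = 0 := by
    refine Polynomial.eq_zero_of_infinite_isRoot _ (hS.mono fun x hx => ?_)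
    rcases h ⟨x, hx, rfl⟩ with hx' | hx'
    · simp [Polynomial.IsRoot, ← eval_curvePoint, hx' _ hf₁]
    · simp [Polynomial.IsRoot, ← eval_curvePoint, hx' _ hf₂]
  rcases mul_eq_zero.mp hprod with h₀ | h₀
  · exact hx₁ (by rw [h₀, Polynomial.eval_zero])
  · exact hx₂ (by rw [h₀, Polynomial.eval_zero])

end ZariskiClosure

section UnipotentPowers

variable {A : Type*} [Ring A]

lemma sum_choose_smul_pow_mul_one_add {N : A} {m : ℕ} (hN : N ^ m = 0) (k : ℤ) :
    (∑ j ∈ range m, Ring.choose k j • N ^ j) * (1 + N) =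
      ∑ j ∈ range m, Ring.choose (k + 1) j • N ^ j := by
  cases m with
  | zero => simp
  | succ m =>
    rw [mul_add, mul_one, sum_mul, sum_range_succ (fun j => Ring.choose k j • N ^ j * N) m,
      sum_range_succ' (fun j => Ring.choose k j • N ^ j) m,
      sum_range_succ' (fun j => Ring.choose (k + 1) j • N ^ j) m]
    simp only [Ring.choose_succ_succ, add_smul, sum_add_distrib, smul_mul_assoc, ← pow_succ,
      hN, smul_zero, add_zero, Ring.choose_zero_right, pow_zero]
    abel

lemma Units.val_zpow_eq_sum_choose_smul (u : Aˣ) {m : ℕ} (hu : ((u : A) - 1) ^ m = 0) (k : ℤ) :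
    ((u ^ k : Aˣ) : A) = ∑ j ∈ range m, Ring.choose k j • ((u : A) - 1) ^ j := by
  have hstep (k : ℤ) := sum_choose_smul_pow_mul_one_add hu k
  rw [add_sub_cancel] at hstep
  induction k using Int.induction_on with
  | zero =>
    cases m with
    | zero => exact (subsingleton_of_zero_eq_one ((pow_zero _).symm.trans hu).symm).elim _ _
    | succ m => simp [sum_range_succ', Ring.choose_zero_succ]
  | succ k ih => rw [zpow_add_one, Units.val_mul, ih, hstep]
  | pred k ih =>
    rw [← Units.mul_left_inj u, ← Units.val_mul, ← zpow_add_one, sub_add_cancel, ih, hstep,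
      sub_add_cancel]

end UnipotentPowers

lemma Matrix.det_one_add_of_isNilpotent {ι R : Type*} [Fintype ι] [DecidableEq ι] [CommRing R]
    [IsDomain R] {N : Matrix ι ι R} (hN : IsNilpotent N) : (1 + N).det = 1 := by
  -- `r ↦ det (1 + r • N)` is the reversed characteristic polynomial of `-N`, a unit, hence constant.
  have hunit := Matrix.isUnit_charpolyRev_of_isNilpotent hN.neg
  have hC := Polynomial.eq_C_of_natDegree_eq_zero (Polynomial.natDegree_eq_zero_of_isUnit hunit)
  have heval (r : R) : (-N).charpolyRev.eval r = (1 + r • N).det := by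
    rw [Matrix.charpolyRev, ← Polynomial.coe_evalRingHom, RingHom.map_det]
    congr 1
    ext i j
    by_cases h : i = j <;> simp [h] <;> ring
  rw [← one_smul R N, ← heval, hC, Polynomial.eval_C, Polynomial.coeff_zero_eq_eval_zero, heval,
    zero_smul, add_zero, Matrix.det_one]

section BinomialCurve

variable {K ι : Type*} [Field K] [CharZero K] [Fintype ι] [DecidableEq ι]

lemma Polynomial.eval_intCast_choose_X (k : ℤ) (j : ℕ) :
    (Ring.choose (X : K[X]) j).eval (k : K) = Ring.choose k j := by
  rw [← coe_evalRingHom, Ring.map_choose, coe_evalRingHom, eval_X]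
  exact (Ring.map_choose (Int.castRingHom K) k j).symm

def binomialCurve (N : Matrix ι ι K) (m : ℕ) : Matrix ι ι K[X] :=
  ∑ j ∈ range m, Ring.choose (Polynomial.X : K[X]) j • (N ^ j).map Polynomial.C

lemma eval_binomialCurve_intCast (N : Matrix ι ι K) (m : ℕ) (k : ℤ) (i i' : ι) :
    (binomialCurve N m i i').eval (k : K) = (∑ j ∈ range m, Ring.choose k j • N ^ j) i i' := by
  simp only [binomialCurve, Matrix.sum_apply, Matrix.smul_apply, Matrix.map_apply, smul_eq_mul,
    Polynomial.eval_finsetSum, Polynomial.eval_mul, Polynomial.eval_C,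
    Polynomial.eval_intCast_choose_X]
  simp only [zsmul_eq_mul]

end BinomialCurve

section Unipotent

def unipotentOrbitCurve {n : ℕ} (g : GL (Fin n) Qbar) : glIdx n → Qbar[X] :=
  Sum.elim (fun p => binomialCurve ((g : Matrix (Fin n) (Fin n) Qbar) - 1) n p.1 p.2) fun _ => 1

variable {n : ℕ} {g : GL (Fin n) Qbar}

lemma det_zpow_of_isUnipotent (hg : IsUnipotent g) (k : ℤ) :
    ((g ^ k : GL (Fin n) Qbar) : Matrix (Fin n) (Fin n) Qbar).det = 1 := by
  have hdet : Matrix.GeneralLinearGroup.det g = 1 := by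
    ext
    simpa using Matrix.det_one_add_of_isNilpotent ⟨n, hg⟩
  rw [← Matrix.GeneralLinearGroup.val_det_apply, map_zpow, hdet, one_zpow, Units.val_one]

lemma glPoint_zpow_of_isUnipotent (hg : IsUnipotent g) (k : ℤ) :
    glPoint (g ^ k) = curvePoint (unipotentOrbitCurve g) k := by
  funext s
  rcases s with ⟨i, j⟩ | -
  · simp [glPoint, curvePoint, unipotentOrbitCurve, eval_binomialCurve_intCast,
      Units.val_zpow_eq_sum_choose_smul g hg]
  · simp only [glPoint, curvePoint, unipotentOrbitCurve, Sum.elim_inr,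
      det_zpow_of_isUnipotent hg, inv_one, Polynomial.eval_one]

lemma glPoint_image_closure_of_isUnipotent (hg : IsUnipotent g) :
    glPoint '' (Subgroup.closure {g} : Set (GL (Fin n) Qbar)) =
      curvePoint (unipotentOrbitCurve g) '' Set.range ((↑) : ℤ → Qbar) := by
  rw [← Subgroup.zpowers_eq_closure, Subgroup.coe_zpowers, ← Set.range_comp, ← Set.range_comp]
  exact congrArg Set.range (funext (glPoint_zpow_of_isUnipotent hg))

end Unipotent

/-- **Irreducibility for a unipotent element**: if `g ∈ GL_n(ℚ̄)` is unipotent, then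
`Zcl(⟨g⟩)` is an irreducible algebraic set: it is nonempty and is not the union of two
algebraic proper subsets. -/
theorem stmt8 (n : ℕ) (g : GL (Fin n) Qbar) (hg : IsUnipotent g) :
    (cyclicClosure g).Nonempty ∧
    ∀ X₁ X₂ : Set (glIdx n → Qbar), IsAlgebraicSet X₁ → IsAlgebraicSet X₂ →
      cyclicClosure g = X₁ ∪ X₂ → X₁ = cyclicClosure g ∨ X₂ = cyclicClosure g := by
  rw [cyclicClosure, glPoint_image_closure_of_isUnipotent hg]
  refine ⟨((Set.range_nonempty _).image _).mono (subset_zariskiClosure _), fun X₁ X₂ => ?_⟩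
  exact eq_zariskiClosure_or_eq_of_union_eq fun I₁ I₂ =>
    image_curvePoint_subset_or_of_subset_union _
      (Set.infinite_range_of_injective Int.cast_injective)
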